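/- arXiv:1603.05936 — 3 statements merged into one kernel-verified Lean document; each statement's English description precedes it below -/
import Mathlib

section
/- The function F_1(ξ) = ξ^{1/m} (C_m - κ_m ξ^{(m+1)/m})_+^{1/(m-1)}, with κ_m = (m-1)/(2m(m+1)), satisfies the profile ODE (F_1^m)''(ξ) + (1/(2m)) ξ F_1'(ξ) + (1/m) F_1(ξ) = 0 for all ξ in the open interval (0, (C_m/κ_m)^{m/(m+1)}) where F_1 is positive. -/
/-!
Write `u = C - κ ξ^{(m+1)/m}`, so that `F₁ = ξ^{1/m} u^{1/(m-1)}` and `F₁^m = ξ G` with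
`G = u^{m/(m-1)}`. The choice of `κ_m` is exactly what makes `G' = -(1/(2m)) F₁`. Hence
`(F₁^m)' = G + ξ G' = G - (1/(2m)) ξ F₁`, and differentiating once more,
`(F₁^m)'' = G' - (1/(2m)) (F₁ + ξ F₁') = -(1/m) F₁ - (1/(2m)) ξ F₁'`, which is the ODE.
No explicit formula for `F₁'` is needed, only its existence.
-/

open Real Set Filter Topology

lemma hasDerivAt_rpow_sub_mul_rpow (C κ p q : ℝ) {x : ℝ} (hx : 0 < x)
    (hu : C - κ * x ^ p ≠ 0) :
    HasDerivAt (fun y => (C - κ * y ^ p) ^ q)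
      (-(q * κ * p) * x ^ (p - 1) * (C - κ * x ^ p) ^ (q - 1)) x := by
  have hinner : HasDerivAt (fun y => C - κ * y ^ p) (-(κ * (p * x ^ (p - 1)))) x := by
    simpa using ((hasDerivAt_rpow_const (p := p) (Or.inl hx.ne')).const_mul κ).const_sub C
  convert hinner.rpow_const (p := q) (Or.inl hu) using 1
  ring

lemma sub_mul_rpow_pos_of_lt {C κ p x : ℝ} (hκ : 0 < κ) (hC : 0 ≤ C) (hp : 0 < p)
    (hx : 0 ≤ x) (hlt : x < (C / κ) ^ p⁻¹) : 0 < C - κ * x ^ p := by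
  rw [Real.lt_rpow_inv_iff_of_pos hx (by positivity) hp, lt_div_iff₀ hκ] at hlt
  linarith

lemma rpow_one_div_mul_rpow_rpow {m x u : ℝ} (hm : m ≠ 0) (hx : 0 ≤ x) (hu : 0 ≤ u) :
    (x ^ (1 / m) * u ^ (1 / (m - 1))) ^ m = x * u ^ (m / (m - 1)) := by
  rw [Real.mul_rpow (by positivity) (by positivity), ← Real.rpow_mul hx, ← Real.rpow_mul hu,
    one_div_mul_cancel hm, Real.rpow_one, one_div_mul_eq_div]

lemma hasDerivAt_dipole_potential {m C κ x : ℝ} (hm : 1 < m)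
    (hκ : κ = (m - 1) / (2 * m * (m + 1))) (hx : 0 < x) (hu : C - κ * x ^ ((m + 1) / m) ≠ 0) :
    HasDerivAt (fun y => (C - κ * y ^ ((m + 1) / m)) ^ (m / (m - 1)))
      (-(1 / (2 * m)) * (x ^ (1 / m) * (C - κ * x ^ ((m + 1) / m)) ^ (1 / (m - 1)))) x := by
  have hm0 : m ≠ 0 := by positivity
  have hm1 : m - 1 ≠ 0 := sub_ne_zero.mpr hm.ne'
  convert hasDerivAt_rpow_sub_mul_rpow C κ ((m + 1) / m) (m / (m - 1)) hx hu using 1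
  rw [show (m + 1) / m - 1 = 1 / m by field_simp; ring,
    show m / (m - 1) - 1 = 1 / (m - 1) by field_simp; ring, hκ]
  field_simp

lemma profile_ode_of_rpow_eq_mul {m ξ : ℝ} {F G : ℝ → ℝ} {S : Set ℝ} (hm : m ≠ 0)
    (hS : S ∈ 𝓝 ξ) (hFm : ∀ y ∈ S, F y ^ m = y * G y)
    (hG : ∀ y ∈ S, HasDerivAt G (-(1 / (2 * m)) * F y) y) (hFd : DifferentiableAt ℝ F ξ) :
    deriv (deriv (fun y => F y ^ m)) ξ + (1 / (2 * m)) * ξ * deriv F ξ + (1 / m) * F ξ = 0 := by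
  have hFm' : deriv (fun y => F y ^ m) =ᶠ[𝓝 ξ] fun y => G y - 1 / (2 * m) * (y * F y) := by
    filter_upwards [EventuallyEq.deriv (eventually_of_mem hS hFm), hS] with y hy hyS
    have hd : HasDerivAt (fun y => y * G y) (1 * G y + y * (-(1 / (2 * m)) * F y)) y :=
      (hasDerivAt_id' y).mul (hG y hyS)
    rw [hy, hd.deriv]
    ring
  have hd : HasDerivAt (fun y => G y - 1 / (2 * m) * (y * F y))
      (-(1 / (2 * m)) * F ξ - 1 / (2 * m) * (1 * F ξ + ξ * deriv F ξ)) ξ :=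
    (hG ξ (mem_of_mem_nhds hS)).sub
      (((hasDerivAt_id' ξ).mul hFd.hasDerivAt).const_mul (1 / (2 * m)))
  rw [hFm'.deriv_eq, hd.deriv]
  field_simp
  ring

/-- The explicit dipole profile `F₁(ξ) = ξ^{1/m} (C_m - κ_m ξ^{(m+1)/m})_+^{1/(m-1)}`,
with `κ_m = (m-1)/(2m(m+1))`, satisfies the profile ODE
`(F₁^m)'' + (1/(2m)) ξ F₁' + (1/m) F₁ = 0` on `(0, (C_m/κ_m)^{m/(m+1)})`. -/
theorem stmt0 (m C : ℝ) (hm : 1 < m) (hC : 0 < C)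
    (κ : ℝ) (hκ : κ = (m - 1) / (2 * m * (m + 1)))
    (F : ℝ → ℝ)
    (hF : ∀ ξ ∈ Ioo (0 : ℝ) ((C / κ) ^ (m / (m + 1))),
      F ξ = ξ ^ (1 / m) * (C - κ * ξ ^ ((m + 1) / m)) ^ (1 / (m - 1))) :
    ∀ ξ ∈ Ioo (0 : ℝ) ((C / κ) ^ (m / (m + 1))),
      deriv (deriv (fun y => F y ^ m)) ξ + (1 / (2 * m)) * ξ * deriv F ξ
        + (1 / m) * F ξ = 0 := by
  intro ξ hξ
  have hS := isOpen_Ioo.mem_nhds hξ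
  have hm0 : 0 < m := by linarith
  have hκ0 : 0 < κ := by
    rw [hκ]
    have : 0 < m - 1 := by linarith
    positivity
  have hu : ∀ y ∈ Ioo (0 : ℝ) ((C / κ) ^ (m / (m + 1))), 0 < C - κ * y ^ ((m + 1) / m) :=
    fun y hy => sub_mul_rpow_pos_of_lt hκ0 hC.le (by positivity) hy.1.le
      (by rw [inv_div]; exact hy.2)
  refine profile_ode_of_rpow_eq_mul hm0.ne' hS
    (G := fun y => (C - κ * y ^ ((m + 1) / m)) ^ (m / (m - 1))) (fun y hy => ?_)
    (fun y hy => ?_) ?_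
  · rw [hF y hy]
    exact rpow_one_div_mul_rpow_rpow hm0.ne' hy.1.le (hu y hy).le
  · rw [hF y hy]
    exact hasDerivAt_dipole_potential hm hκ hy.1 (hu y hy).ne'
  · refine DifferentiableAt.congr_of_eventuallyEq ?_ (eventually_of_mem hS hF)
    exact ((hasDerivAt_rpow_const (Or.inl hξ.1.ne')).mul
      (hasDerivAt_rpow_sub_mul_rpow C κ _ _ hξ.1 (hu ξ hξ).ne')).differentiableAt
end

section
/- If k solves t k'(t) = -α(k(t)^m - k(t)) with k > 1 and F satisfies the profile ODE with F' > 0 on the relevant interval, then V(x,t) = k(t) t^{-α} F((x+a)/t^β) satisfies V_t - (V^m)_xx = t^{-α-1}(k(t)^m - k(t)) β ξ F'(ξ) ≥ 0, where ξ = (x+a)/t^β; i.e., V is a supersolution. -/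
open Real Set Filter Topology

/-!
Write `V = k(t) t^{-α} F(ξ)` with `ξ = (x + a) t^{-β}`. The chain rule gives
`V_t = t^{-α-1} ((t k' - α k) F(ξ) - β k ξ F'(ξ))` and, since `2β = α` and `α m = 1`,
`(V^m)_xx = t^{-α-1} k^m (F^m)''(ξ)`. Substituting the profile ODE for `(F^m)''` and the ODE
of `k` for `t k'`, the `F` terms cancel and what remains is `t^{-α-1} (k^m - k) β ξ F'(ξ)`,
which is nonnegative because `k > 1`, `m > 1` and `ξ, F'(ξ) > 0`.
-/

lemma hasDerivAt_selfSimilar (k F : ℝ → ℝ) (α β b : ℝ) {t : ℝ} (ht : 0 < t)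
    (hk : DifferentiableAt ℝ k t) (hF : DifferentiableAt ℝ F (b * t ^ (-β))) :
    HasDerivAt (fun s => k s * s ^ (-α) * F (b * s ^ (-β)))
      (t ^ (-α - 1) * ((t * deriv k t - α * k t) * F (b * t ^ (-β))
        - β * k t * (b * t ^ (-β)) * deriv F (b * t ^ (-β)))) t := by
  have hpowα : HasDerivAt (fun s : ℝ => s ^ (-α)) (-α * t ^ (-α - 1)) t :=
    hasDerivAt_rpow_const (Or.inl ht.ne')
  have hpowβ : HasDerivAt (fun s : ℝ => s ^ (-β)) (-β * t ^ (-β - 1)) t :=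
    hasDerivAt_rpow_const (Or.inl ht.ne')
  have hFcomp := hF.hasDerivAt.comp t (hpowβ.const_mul b)
  refine ((hk.hasDerivAt.mul hpowα).mul hFcomp).congr_deriv ?_
  have hα : t ^ (-α) = t ^ (-α - 1) * t := by
    rw [rpow_sub ht, rpow_one, div_mul_cancel₀ _ ht.ne']
  have hβ : t ^ (-β) = t ^ (-β - 1) * t := by
    rw [rpow_sub ht, rpow_one, div_mul_cancel₀ _ ht.ne']
  simp only [Function.comp_apply, Pi.mul_apply]
  rw [hα, hβ]
  ring

-- No differentiability of `G` is needed: for an affine change of variables the identity also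
-- holds between the junk values `deriv = 0`.
lemma deriv_comp_add_mul_const (G : ℝ → ℝ) (a c : ℝ) :
    deriv (fun y => G ((y + a) * c)) = fun y => c * deriv G ((y + a) * c) := by
  funext y
  have hmul : deriv (fun z => G (z * c)) (y + a) = c * deriv G ((y + a) * c) := by
    simp only [mul_comm _ c]
    exact deriv_comp_mul_left c G (y + a)
  rw [← hmul]
  exact deriv_comp_add_const (fun z => G (z * c)) a y

lemma deriv_deriv_comp_add_mul_const (G : ℝ → ℝ) (a c x : ℝ) :
    deriv (deriv fun y => G ((y + a) * c)) x = c ^ 2 * deriv (deriv G) ((x + a) * c) := by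
  rw [deriv_comp_add_mul_const, deriv_const_mul_field, deriv_comp_add_mul_const]
  ring

lemma deriv_deriv_rpow_const_mul_comp (F : ℝ → ℝ) {K : ℝ} (m a c x : ℝ) (hK : 0 ≤ K)
    (hF : ∀ᶠ y in 𝓝 x, 0 ≤ F ((y + a) * c)) :
    deriv (deriv fun y => (K * F ((y + a) * c)) ^ m) x
      = K ^ m * c ^ 2 * deriv (deriv fun z => F z ^ m) ((x + a) * c) := by
  have hpow : (fun y => (K * F ((y + a) * c)) ^ m) =ᶠ[𝓝 x]
      fun y => K ^ m * F ((y + a) * c) ^ m :=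
    hF.mono fun y hy => mul_rpow hK hy
  rw [hpow.deriv.deriv_eq, deriv_const_mul_field', deriv_const_mul_field,
    deriv_deriv_comp_add_mul_const (fun z => F z ^ m)]
  ring

lemma rpow_mul_rpow_neg_inv_sq {m : ℝ} (hm : m ≠ 0) {k t : ℝ} (hk : 0 ≤ k) (ht : 0 < t) :
    (k * t ^ (-(1 / m))) ^ m * (t ^ (-(1 / (2 * m)))) ^ 2 = k ^ m * t ^ (-(1 / m) - 1) := by
  rw [mul_rpow hk (rpow_nonneg ht.le _), ← rpow_mul ht.le, ← rpow_natCast, ← rpow_mul ht.le,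
    mul_assoc, ← rpow_add ht]
  congr 2
  field_simp
  ring

theorem stmt11_general (m a T : ℝ) (hm : 1 < m) (hT : 0 < T)
    (I : Set ℝ) (hI : IsOpen I) (hIsub : I ⊆ Ioi (0 : ℝ))
    (F : ℝ → ℝ)
    (hFnonneg : ∀ ξ ∈ I, 0 ≤ F ξ)
    (hFdiff : ∀ ξ ∈ I, DifferentiableAt ℝ F ξ)
    (hODE : ∀ ξ ∈ I,
      deriv (deriv (fun y => F y ^ m)) ξ + (1 / (2 * m)) * ξ * deriv F ξ
        + (1 / m) * F ξ = 0)
    (hF'pos : ∀ ξ ∈ I, 0 < deriv F ξ)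
    (k : ℝ → ℝ) (hk : ∀ t : ℝ, T ≤ t → 1 < k t)
    (hkdiff : ∀ t : ℝ, T ≤ t → DifferentiableAt ℝ k t)
    (hkODE : ∀ t : ℝ, T ≤ t → t * deriv k t = -(1 / m) * (k t ^ m - k t))
    (V : ℝ → ℝ → ℝ)
    (hV : ∀ x t : ℝ, V x t = k t * t ^ (-(1 / m)) * F ((x + a) * t ^ (-(1 / (2 * m))))) :
    ∀ x t : ℝ, T ≤ t → (x + a) * t ^ (-(1 / (2 * m))) ∈ I →
      (deriv (fun s => V x s) t - deriv (deriv (fun y => V y t ^ m)) x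
        = t ^ (-(1 / m) - 1) * (k t ^ m - k t) * ((1 / (2 * m)) *
            ((x + a) * t ^ (-(1 / (2 * m)))) *
            deriv F ((x + a) * t ^ (-(1 / (2 * m)))))) ∧
      0 ≤ deriv (fun s => V x s) t - deriv (deriv (fun y => V y t ^ m)) x := by
  intro x t ht hξ
  have ht0 : 0 < t := hT.trans_le ht
  have hk0 : 0 < k t := one_pos.trans (hk t ht)
  set ξ := (x + a) * t ^ (-(1 / (2 * m)))
  have hVt : deriv (fun s => V x s) t = t ^ (-(1 / m) - 1) * ((t * deriv k t - 1 / m * k t) * F ξ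
      - 1 / (2 * m) * k t * ξ * deriv F ξ) := by
    simp only [hV]
    exact (hasDerivAt_selfSimilar k F _ _ _ ht0 (hkdiff t ht) (hFdiff _ hξ)).deriv
  have hFnear : ∀ᶠ y in 𝓝 x, 0 ≤ F ((y + a) * t ^ (-(1 / (2 * m)))) :=
    ((continuous_add_const a).mul continuous_const).continuousAt.eventually_mem
      (hI.mem_nhds hξ) |>.mono fun y hy => hFnonneg _ hy
  have hVxx : deriv (deriv fun y => V y t ^ m) x
      = k t ^ m * t ^ (-(1 / m) - 1) * deriv (deriv fun z => F z ^ m) ξ := by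
    simp only [hV]
    rw [deriv_deriv_rpow_const_mul_comp F m a _ x (by positivity) hFnear,
      rpow_mul_rpow_neg_inv_sq (by positivity) hk0.le ht0]
  have key : deriv (fun s => V x s) t - deriv (deriv (fun y => V y t ^ m)) x
      = t ^ (-(1 / m) - 1) * (k t ^ m - k t) * ((1 / (2 * m)) * ξ * deriv F ξ) := by
    rw [hVt, hVxx]
    linear_combination t ^ (-(1 / m) - 1) * (F ξ * hkODE t ht - k t ^ m * hODE _ hξ)
  refine ⟨key, key ▸ ?_⟩
  have hgap : 0 < k t ^ m - k t := sub_pos.mpr (self_lt_rpow_of_one_lt (hk t ht) hm)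
  have hξpos : 0 < ξ := hIsub hξ
  have hF' := hF'pos _ hξ
  have hβ : 0 < 1 / (2 * m) := by positivity
  positivity

/-- If `k` solves `t k'(t) = -α(k^m - k)` with `k > 1`, and `F` satisfies the profile
ODE with `F' > 0`, then `V(x,t) = k(t) t^{-α} F((x+a)/t^β)` satisfies
`V_t - (V^m)_xx = t^{-α-1}(k^m - k) β ξ F'(ξ) ≥ 0`: it is a supersolution. -/
theorem stmt11 (m a T : ℝ) (hm : 1 < m) (ha : 0 < a) (hT : 0 < T)
    (I : Set ℝ) (hI : IsOpen I) (hIsub : I ⊆ Ioi (0 : ℝ))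
    (F : ℝ → ℝ)
    (hFnonneg : ∀ ξ ∈ I, 0 ≤ F ξ)
    (hFdiff : ∀ ξ ∈ I, DifferentiableAt ℝ F ξ)
    (hFdiff2 : ∀ ξ ∈ I, DifferentiableAt ℝ (deriv F) ξ)
    (hFm : ∀ ξ ∈ I, DifferentiableAt ℝ (fun y => F y ^ m) ξ)
    (hFm2 : ∀ ξ ∈ I, DifferentiableAt ℝ (deriv (fun y => F y ^ m)) ξ)
    (hODE : ∀ ξ ∈ I,
      deriv (deriv (fun y => F y ^ m)) ξ + (1 / (2 * m)) * ξ * deriv F ξ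
        + (1 / m) * F ξ = 0)
    (hF'pos : ∀ ξ ∈ I, 0 < deriv F ξ)
    (k : ℝ → ℝ) (hk : ∀ t : ℝ, T ≤ t → 1 < k t)
    (hkdiff : ∀ t : ℝ, T ≤ t → DifferentiableAt ℝ k t)
    (hkODE : ∀ t : ℝ, T ≤ t → t * deriv k t = -(1 / m) * (k t ^ m - k t))
    (V : ℝ → ℝ → ℝ)
    (hV : ∀ x t : ℝ, V x t = k t * t ^ (-(1 / m)) * F ((x + a) * t ^ (-(1 / (2 * m))))) :
    ∀ x t : ℝ, T ≤ t → (x + a) * t ^ (-(1 / (2 * m))) ∈ I →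
      (deriv (fun s => V x s) t - deriv (deriv (fun y => V y t ^ m)) x
        = t ^ (-(1 / m) - 1) * (k t ^ m - k t) * ((1 / (2 * m)) *
            ((x + a) * t ^ (-(1 / (2 * m)))) *
            deriv F ((x + a) * t ^ (-(1 / (2 * m)))))) ∧
      0 ≤ deriv (fun s => V x s) t - deriv (deriv (fun y => V y t ^ m)) x :=
  stmt11_general m a T hm hT I hI hIsub F hFnonneg hFdiff hODE hF'pos k hk hkdiff hkODE V hV
end

section
/- If c solves t c'(t) = α(c(t) - c(t)^m) with 0 < c < 1 and F satisfies the profile ODE with F' > 0, then v(x,t) = c(t) t^{-α} F((x-a)/t^β) satisfies v_t - (v^m)_xx = -t^{-α-1}(c(t) - c(t)^m) β ξ F'(ξ) ≤ 0, where ξ = (x-a)/t^β; i.e., v is a subsolution. -/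
open Real Set

/-!
Because `F ≥ 0` on `I`, near `x` we have `v^m = c^m t⁻¹ (F^m)(ξ)`, so with `β = α / 2`
`(v^m)_xx = c^m t^{-α-1} (F^m)''(ξ)`, while `v_t = t^{-α-1} ((t c' - α c) F(ξ) - β c ξ F'(ξ))`.
Eliminating `(F^m)''` by the profile equation and `t c'` by the equation for `c`, the terms in
`F(ξ)` cancel and `-t^{-α-1} (c - c^m) β ξ F'(ξ)` is left; it is `≤ 0` because `c^m ≤ c` on
`(0, 1)` and `ξ, F'(ξ) > 0`.
-/

theorem deriv_comp_sub_mul_const (G : ℝ → ℝ) (a l : ℝ) :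
    deriv (fun y => G ((y - a) * l)) = fun y => l * deriv G ((y - a) * l) := by
  funext y
  have h := deriv_comp_mul_left l G (y - a)
  simp only [smul_eq_mul] at h
  simp only [mul_comm _ l]
  exact (deriv_comp_sub_const (f := fun z => G (l * z)) (a := a) (x := y)).trans h

theorem deriv_deriv_const_mul_comp_sub_mul_const (G : ℝ → ℝ) (K a l x : ℝ) :
    deriv (deriv fun y => K * G ((y - a) * l)) x
      = K * l ^ 2 * deriv (deriv G) ((x - a) * l) := by
  have h := deriv_comp_sub_mul_const (deriv G) a l
  simp only [deriv_const_mul_field', deriv_comp_sub_mul_const, h]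
  ring

theorem hasDerivAt_mul_rpow_mul_comp_mul_rpow {c F : ℝ → ℝ} {c' F' α β a x t : ℝ}
    (ht : 0 < t) (hc : HasDerivAt c c' t) (hF : HasDerivAt F F' ((x - a) * t ^ (-β))) :
    HasDerivAt (fun s => c s * s ^ (-α) * F ((x - a) * s ^ (-β)))
      (t ^ (-α - 1) * ((t * c' - α * c t) * F ((x - a) * t ^ (-β))
        - β * c t * ((x - a) * t ^ (-β)) * F')) t := by
  have hscale := (hasDerivAt_rpow_const (p := -β) (Or.inl ht.ne')).const_mul (x - a)
  refine ((hc.mul (hasDerivAt_rpow_const (Or.inl ht.ne'))).mul (hF.comp t hscale)).congr_deriv ?_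
  rw [rpow_sub_one ht.ne', rpow_sub_one ht.ne', Function.comp_apply, Pi.mul_apply]
  field_simp
  ring

theorem mul_rpow_neg_inv_mul_rpow {m c t f : ℝ} (hm : m ≠ 0) (hc : 0 ≤ c) (ht : 0 < t)
    (hf : 0 ≤ f) : (c * t ^ (-(1 / m)) * f) ^ m = c ^ m * t⁻¹ * f ^ m := by
  rw [mul_rpow (by positivity) hf, mul_rpow hc (by positivity), ← rpow_mul ht.le,
    neg_mul, one_div_mul_cancel hm, rpow_neg_one]

theorem inv_mul_rpow_neg_one_div_two_mul_sq {m t : ℝ} (hm : m ≠ 0) (ht : 0 < t) :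
    t⁻¹ * (t ^ (-(1 / (2 * m)))) ^ 2 = t ^ (-(1 / m) - 1) := by
  rw [← rpow_natCast, ← rpow_mul ht.le, ← rpow_neg_one, ← rpow_add ht]
  congr 1
  field_simp
  ring

theorem deriv_deriv_rpow_mul_rpow_comp {m c t a x : ℝ} {F : ℝ → ℝ} {I : Set ℝ} (hm : m ≠ 0)
    (hc : 0 ≤ c) (ht : 0 < t) (hI : IsOpen I) (hF : ∀ ξ ∈ I, 0 ≤ F ξ)
    (hx : (x - a) * t ^ (-(1 / (2 * m))) ∈ I) :
    deriv (deriv fun y => (c * t ^ (-(1 / m)) * F ((y - a) * t ^ (-(1 / (2 * m))))) ^ m) x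
      = c ^ m * t ^ (-(1 / m) - 1)
          * deriv (deriv fun z => F z ^ m) ((x - a) * t ^ (-(1 / (2 * m)))) := by
  have hpow : (fun y => (c * t ^ (-(1 / m)) * F ((y - a) * t ^ (-(1 / (2 * m))))) ^ m)
      =ᶠ[nhds x] fun y => c ^ m * t⁻¹ * (fun z => F z ^ m) ((y - a) * t ^ (-(1 / (2 * m)))) := by
    have hU : IsOpen ((fun y => (y - a) * t ^ (-(1 / (2 * m)))) ⁻¹' I) :=
      hI.preimage (by fun_prop)
    filter_upwards [hU.mem_nhds hx] with y hy
    rw [mul_rpow_neg_inv_mul_rpow hm hc ht (hF _ hy)]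
  rw [hpow.deriv.deriv_eq, deriv_deriv_const_mul_comp_sub_mul_const (fun z => F z ^ m),
    mul_assoc (c ^ m), inv_mul_rpow_neg_one_div_two_mul_sq hm ht]

theorem stmt12_general (m a T : ℝ) (hm : 1 < m) (hT : 0 < T)
    (I : Set ℝ) (hI : IsOpen I) (hIsub : I ⊆ Ioi (0 : ℝ))
    (F : ℝ → ℝ)
    (hFnonneg : ∀ ξ ∈ I, 0 ≤ F ξ)
    (hFdiff : ∀ ξ ∈ I, DifferentiableAt ℝ F ξ)
    (hODE : ∀ ξ ∈ I,
      deriv (deriv (fun y => F y ^ m)) ξ + (1 / (2 * m)) * ξ * deriv F ξ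
        + (1 / m) * F ξ = 0)
    (hF'pos : ∀ ξ ∈ I, 0 < deriv F ξ)
    (c : ℝ → ℝ) (hc : ∀ t : ℝ, T ≤ t → c t ∈ Ioo (0 : ℝ) 1)
    (hcdiff : ∀ t : ℝ, T ≤ t → DifferentiableAt ℝ c t)
    (hcODE : ∀ t : ℝ, T ≤ t → t * deriv c t = (1 / m) * (c t - c t ^ m))
    (v : ℝ → ℝ → ℝ)
    (hv : ∀ x t : ℝ, v x t = c t * t ^ (-(1 / m)) * F ((x - a) * t ^ (-(1 / (2 * m))))) :
    ∀ x t : ℝ, T ≤ t → (x - a) * t ^ (-(1 / (2 * m))) ∈ I →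
      (deriv (fun s => v x s) t - deriv (deriv (fun y => v y t ^ m)) x
        = -(t ^ (-(1 / m) - 1) * (c t - c t ^ m) * ((1 / (2 * m)) *
            ((x - a) * t ^ (-(1 / (2 * m)))) *
            deriv F ((x - a) * t ^ (-(1 / (2 * m))))))) ∧
      deriv (fun s => v x s) t - deriv (deriv (fun y => v y t ^ m)) x ≤ 0 := by
  intro x t ht hξ
  set ξ := (x - a) * t ^ (-(1 / (2 * m)))
  have hm0 : 0 < m := one_pos.trans hm
  have ht0 : 0 < t := hT.trans_le ht
  have htime : deriv (fun s => v x s) t = t ^ (-(1 / m) - 1) *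
      ((t * deriv c t - 1 / m * c t) * F ξ - 1 / (2 * m) * c t * ξ * deriv F ξ) := by
    simp only [hv]
    exact (hasDerivAt_mul_rpow_mul_comp_mul_rpow ht0 (hcdiff t ht).hasDerivAt
      (hFdiff ξ hξ).hasDerivAt).deriv
  have hspace : deriv (deriv fun y => v y t ^ m) x
      = c t ^ m * t ^ (-(1 / m) - 1) * deriv (deriv fun z => F z ^ m) ξ := by
    simp only [hv]
    exact deriv_deriv_rpow_mul_rpow_comp hm0.ne' (hc t ht).1.le ht0 hI hFnonneg hξ
  have hresidual : deriv (fun s => v x s) t - deriv (deriv fun y => v y t ^ m) x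
      = -(t ^ (-(1 / m) - 1) * (c t - c t ^ m) * (1 / (2 * m) * ξ * deriv F ξ)) := by
    rw [htime, hspace]
    linear_combination t ^ (-(1 / m) - 1) * F ξ * hcODE t ht
      - t ^ (-(1 / m) - 1) * c t ^ m * hODE ξ hξ
  have hcm : c t ^ m ≤ c t := rpow_le_self_of_le_one (hc t ht).1.le (hc t ht).2.le hm.le
  have hξ0 : 0 < ξ := hIsub hξ
  have hF'ξ : 0 < deriv F ξ := hF'pos ξ hξ
  refine ⟨hresidual, hresidual ▸ neg_nonpos.mpr ?_⟩
  exact mul_nonneg (mul_nonneg (by positivity) (sub_nonneg.mpr hcm)) (by positivity)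

/-- If `c` solves `t c'(t) = α(c - c^m)` with `0 < c < 1`, and `F` satisfies the profile
ODE with `F' > 0`, then `v(x,t) = c(t) t^{-α} F((x-a)/t^β)` satisfies
`v_t - (v^m)_xx = -t^{-α-1}(c - c^m) β ξ F'(ξ) ≤ 0`: it is a subsolution. -/
theorem stmt12 (m a T : ℝ) (hm : 1 < m) (ha : 0 < a) (hT : 0 < T)
    (I : Set ℝ) (hI : IsOpen I) (hIsub : I ⊆ Ioi (0 : ℝ))
    (F : ℝ → ℝ)
    (hFnonneg : ∀ ξ ∈ I, 0 ≤ F ξ)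
    (hFdiff : ∀ ξ ∈ I, DifferentiableAt ℝ F ξ)
    (hFdiff2 : ∀ ξ ∈ I, DifferentiableAt ℝ (deriv F) ξ)
    (hFm : ∀ ξ ∈ I, DifferentiableAt ℝ (fun y => F y ^ m) ξ)
    (hFm2 : ∀ ξ ∈ I, DifferentiableAt ℝ (deriv (fun y => F y ^ m)) ξ)
    (hODE : ∀ ξ ∈ I,
      deriv (deriv (fun y => F y ^ m)) ξ + (1 / (2 * m)) * ξ * deriv F ξ
        + (1 / m) * F ξ = 0)
    (hF'pos : ∀ ξ ∈ I, 0 < deriv F ξ)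
    (c : ℝ → ℝ) (hc : ∀ t : ℝ, T ≤ t → c t ∈ Ioo (0 : ℝ) 1)
    (hcdiff : ∀ t : ℝ, T ≤ t → DifferentiableAt ℝ c t)
    (hcODE : ∀ t : ℝ, T ≤ t → t * deriv c t = (1 / m) * (c t - c t ^ m))
    (v : ℝ → ℝ → ℝ)
    (hv : ∀ x t : ℝ, v x t = c t * t ^ (-(1 / m)) * F ((x - a) * t ^ (-(1 / (2 * m))))) :
    ∀ x t : ℝ, T ≤ t → (x - a) * t ^ (-(1 / (2 * m))) ∈ I →
      (deriv (fun s => v x s) t - deriv (deriv (fun y => v y t ^ m)) x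
        = -(t ^ (-(1 / m) - 1) * (c t - c t ^ m) * ((1 / (2 * m)) *
            ((x - a) * t ^ (-(1 / (2 * m)))) *
            deriv F ((x - a) * t ^ (-(1 / (2 * m))))))) ∧
      deriv (fun s => v x s) t - deriv (deriv (fun y => v y t ^ m)) x ≤ 0 :=
  stmt12_general m a T hm hT I hI hIsub F hFnonneg hFdiff hODE hF'pos c hc hcdiff hcODE v hv
end
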